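/- Let M be a positive integer and let τ, p_t, q_t, p_d, q_d, β_u, β_j > 0 be real numbers. For a ≥ 0 define γ(a) = τ p_t β_u² / (τ p_t β_u + τ q_t β_j a + 1) and ρ(a) = M p_d γ(a) / (p_d β_u + q_d β_j + M (q_d q_t / p_t)(β_j/β_u)² a γ(a) + 1). Then ρ is strictly decreasing on [0, ∞): for all 0 ≤ a₁ < a₂, ρ(a₂) < ρ(a₁). -/

import Mathlib

open Set

/-
Both γ and ρ are Möbius in `a`: clearing the common denominator of γ gives
`ρ(a) = K A / (E B + (E C + L A) a)` with every coefficient positive, where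
`γ(a) = A / (B + C a)` and `ρ = K γ / (E + L a γ)`. A positive constant over an
increasing positive affine function is strictly decreasing.
-/

lemma strictAntiOn_div_affine {N G S : ℝ} (hN : 0 < N) (hG : 0 < G) (hS : 0 < S) :
    StrictAntiOn (fun a => N / (G + S * a)) (Ici 0) := by
  intro a₁ ha₁ a₂ _ h
  have hpos : 0 < G + S * a₁ := by
    have : (0 : ℝ) ≤ a₁ := ha₁
    positivity
  exact div_lt_div_of_pos_left hN hpos (by gcongr)

lemma mul_div_div_add_mul_mul_div {K A D E L a : ℝ} (hD : D ≠ 0) :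
    K * (A / D) / (E + L * a * (A / D)) = K * A / (E * D + L * A * a) := by
  rw [← div_div_div_cancel_right₀ hD (K * A), mul_div_assoc, add_div, mul_div_assoc,
    mul_div_cancel_right₀ _ hD]
  ring

lemma strictAntiOn_mul_div_add_mul_mul_div_affine {K A B C E L : ℝ} (hK : 0 < K) (hA : 0 < A)
    (hB : 0 < B) (hC : 0 < C) (hE : 0 < E) (hL : 0 ≤ L) :
    StrictAntiOn (fun a => K * (A / (B + C * a)) / (E + L * a * (A / (B + C * a)))) (Ici 0) := by
  refine (strictAntiOn_div_affine (mul_pos hK hA) (mul_pos hE hB)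
    (G := E * B) (S := E * C + L * A) (by positivity)).congr fun a ha => ?_
  have : (0 : ℝ) ≤ a := ha
  have hD : B + C * a ≠ 0 := by positivity
  simp only [mul_div_div_add_mul_mul_div hD]
  ring

/-- **Monotonicity of the effective SINR in the pilot/jamming correlation**: the SINR
`ρ(a)` of Proposition 1 is strictly decreasing in `a = |s_jᵀ s_u^*|²` on `[0, ∞)`. -/
theorem sinr_strictAnti_in_correlation
    (M : ℕ) (hM : 0 < M)
    (τ p_t q_t p_d q_d β_u β_j : ℝ)
    (hτ : 0 < τ) (hpt : 0 < p_t) (hqt : 0 < q_t) (hpd : 0 < p_d) (hqd : 0 < q_d)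
    (hβu : 0 < β_u) (hβj : 0 < β_j)
    (γ ρ : ℝ → ℝ)
    (hγ : ∀ a : ℝ, γ a = τ * p_t * β_u ^ 2 / (τ * p_t * β_u + τ * q_t * β_j * a + 1))
    (hρ : ∀ a : ℝ, ρ a = (M : ℝ) * p_d * γ a /
        (p_d * β_u + q_d * β_j + (M : ℝ) * (q_d * q_t / p_t) * (β_j / β_u) ^ 2 * a * γ a + 1)) :
    ∀ a₁ a₂ : ℝ, 0 ≤ a₁ → a₁ < a₂ → ρ a₂ < ρ a₁ := by
  have hρ_eq : ρ = fun a => ((M : ℝ) * p_d) *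
      (τ * p_t * β_u ^ 2 / ((τ * p_t * β_u + 1) + τ * q_t * β_j * a)) /
      ((p_d * β_u + q_d * β_j + 1) + (M : ℝ) * (q_d * q_t / p_t) * (β_j / β_u) ^ 2 * a *
        (τ * p_t * β_u ^ 2 / ((τ * p_t * β_u + 1) + τ * q_t * β_j * a))) := by
    ext a
    rw [hρ, hγ]
    ring
  have hanti : StrictAntiOn ρ (Ici 0) := by
    rw [hρ_eq]
    exact strictAntiOn_mul_div_add_mul_mul_div_affine (by positivity) (by positivity)
      (by positivity) (by positivity) (by positivity) (by positivity)
  intro a₁ a₂ ha₁ h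
  exact hanti ha₁ (ha₁.trans h.le) h
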